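/- With the notation of the anisotropic mollification: if μ ∈ M(Ω; ℝ^{N×n}) is row-wise divergence free, then for each ε > 0 the mollified measure μ_ε = F_ε 𝓛ⁿ is row-wise divergence free in Ω, i.e., ∫_Ω Σ_j F_ε^{ij}(y) ∂_j ψ(y) dy = 0 for all ψ ∈ C_c¹(Ω) and all i. -/

import Mathlib

open MeasureTheory

/-- Density `F_ε` of the anisotropic mollification:
`F_ε(y) = ∫_Ω d(x)^{-n} ρ_ε((x−y)/d(x)) G(x)(Id + ∇d(x) ⊗ (y−x)/d(x)) d‖μ‖(x)`. -/
noncomputable def molDensity' {n N : ℕ} (σm : Measure (Fin n → ℝ))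
    (G : (Fin n → ℝ) → Fin N → Fin n → ℝ) (d : (Fin n → ℝ) → ℝ)
    (ρ : (Fin n → ℝ) → ℝ) (y : Fin n → ℝ) : Fin N → Fin n → ℝ :=
  fun i l => ∫ x, ((d x)⁻¹) ^ n * ρ ((d x)⁻¹ • (x - y)) *
    (∑ j, G x i j *
      ((if j = l then (1 : ℝ) else 0) +
        fderiv ℝ d x (Pi.single j 1) * ((d x)⁻¹ * (y l - x l)))) ∂σm


set_option maxHeartbeats 1000000
set_option synthInstance.maxHeartbeats 1000000

namespace Stmt12Aux
open MeasureTheory Metric Set Filter Function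


variable {n : ℕ}

variable {n : ℕ} {Ω : Set (Fin n → ℝ)} {d ψ ρ : (Fin n → ℝ) → ℝ} {ε : ℝ}

noncomputable def Dz (d ψ : (Fin n → ℝ) → ℝ) (x z : Fin n → ℝ) : (Fin n → ℝ) →L[ℝ] ℝ :=
  (fderiv ℝ ψ (x + d x • z)).comp
    (ContinuousLinearMap.id ℝ (Fin n → ℝ) + (fderiv ℝ d x).smulRight z)

open Classical in
noncomputable def Phi (Ω : Set (Fin n → ℝ)) (d ψ ρ : (Fin n → ℝ) → ℝ) (x : Fin n → ℝ) : ℝ :=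
  if x ∈ Ω then ∫ z, ρ (-z) * ψ (x + d x • z) else 0

noncomputable def Aop (d ψ ρ : (Fin n → ℝ) → ℝ) (x : Fin n → ℝ) : (Fin n → ℝ) →L[ℝ] ℝ :=
  ∫ z, ρ (-z) • Dz d ψ x z

lemma rho_neg_zero (hρs : tsupport ρ ⊆ closedBall 0 ε) {z : Fin n → ℝ} (hz : ε < ‖z‖) :
    ρ (-z) = 0 := by
  apply image_eq_zero_of_notMem_tsupport
  intro h
  have := hρs h
  simp only [mem_closedBall, dist_zero_right, norm_neg] at this
  linarith

lemma hcs_of_rho_factor (hρs : tsupport ρ ⊆ closedBall 0 ε)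
    {Z : Type*} [Zero Z] (g : (Fin n → ℝ) → Z) (hg : ∀ z, ρ (-z) = 0 → g z = 0) :
    HasCompactSupport g := by
  apply HasCompactSupport.intro (isCompact_closedBall (0 : Fin n → ℝ) ε)
  intro z hz
  apply hg
  apply rho_neg_zero hρs
  simpa [mem_closedBall, dist_zero_right, not_le] using hz

lemma hasFDerivAt_comp (hψ : ContDiff ℝ 1 ψ) {x : Fin n → ℝ} (hdx : DifferentiableAt ℝ d x)
    (z : Fin n → ℝ) :
    HasFDerivAt (fun x => ψ (x + d x • z)) (Dz d ψ x z) x := by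
  have h1 : HasFDerivAt (fun x : Fin n → ℝ => x + d x • z)
      (ContinuousLinearMap.id ℝ (Fin n → ℝ) + (fderiv ℝ d x).smulRight z) x :=
    (hasFDerivAt_id x).add (hdx.hasFDerivAt.smul_const z)
  exact ((hψ.differentiable one_ne_zero _).hasFDerivAt).comp x h1

lemma dz_cont_z (hψ : ContDiff ℝ 1 ψ) (x : Fin n → ℝ) :
    Continuous fun z => Dz d ψ x z := by
  apply Continuous.clm_comp
  · exact (hψ.continuous_fderiv one_ne_zero).comp
      (continuous_const.add (continuous_const_smul _))
  · exact continuous_const.add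
      (((ContinuousLinearMap.smulRightL ℝ (Fin n → ℝ) (Fin n → ℝ)) (fderiv ℝ d x)).continuous)

lemma dz_norm_le {Cψ : ℝ} (hCψ : ∀ y, ‖fderiv ℝ ψ y‖ ≤ Cψ) {x : Fin n → ℝ}
    (hdx : ‖fderiv ℝ d x‖ ≤ 1) (z : Fin n → ℝ) :
    ‖Dz d ψ x z‖ ≤ Cψ * (1 + ‖z‖) := by
  have hCψ0 : 0 ≤ Cψ := le_trans (norm_nonneg _) (hCψ 0)
  calc ‖Dz d ψ x z‖ ≤ ‖fderiv ℝ ψ (x + d x • z)‖ *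
        ‖ContinuousLinearMap.id ℝ (Fin n → ℝ) + (fderiv ℝ d x).smulRight z‖ :=
        ContinuousLinearMap.opNorm_comp_le _ _
    _ ≤ Cψ * (1 + ‖z‖) := by
        apply mul_le_mul (hCψ _) ?_ (norm_nonneg _) hCψ0
        calc ‖ContinuousLinearMap.id ℝ (Fin n → ℝ) + (fderiv ℝ d x).smulRight z‖
            ≤ ‖ContinuousLinearMap.id ℝ (Fin n → ℝ)‖ + ‖(fderiv ℝ d x).smulRight z‖ :=
              norm_add_le _ _
          _ ≤ 1 + ‖z‖ := by
              apply add_le_add ContinuousLinearMap.norm_id_le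
              rw [ContinuousLinearMap.norm_smulRight_apply]
              calc ‖fderiv ℝ d x‖ * ‖z‖ ≤ 1 * ‖z‖ :=
                    mul_le_mul_of_nonneg_right hdx (norm_nonneg _)
                _ = ‖z‖ := one_mul _

lemma bound_integrable (hρc : Continuous ρ) (hρs : tsupport ρ ⊆ closedBall 0 ε) (Cψ : ℝ) :
    Integrable (fun z : Fin n → ℝ => |ρ (-z)| * (Cψ * (1 + ‖z‖))) := by
  apply Continuous.integrable_of_hasCompactSupport
  · exact ((hρc.comp continuous_neg).abs).mul
      (continuous_const.mul (continuous_const.add continuous_norm))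
  · exact hcs_of_rho_factor hρs _ (fun z hz => by simp [hz])

lemma Fx_integrable (hψ : ContDiff ℝ 1 ψ) (hρc : Continuous ρ)
    (hρs : tsupport ρ ⊆ closedBall 0 ε) (x : Fin n → ℝ) :
    Integrable (fun z => ρ (-z) * ψ (x + d x • z)) := by
  apply Continuous.integrable_of_hasCompactSupport
  · exact (hρc.comp continuous_neg).mul
      ((hψ.continuous).comp (continuous_const.add (continuous_const_smul _)))
  · exact hcs_of_rho_factor hρs _ (fun z hz => by simp [hz])

lemma F'_integrable (hψ : ContDiff ℝ 1 ψ) (hρc : Continuous ρ)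
    (hρs : tsupport ρ ⊆ closedBall 0 ε) (x : Fin n → ℝ) :
    Integrable (fun z => ρ (-z) • Dz d ψ x z) := by
  apply Continuous.integrable_of_hasCompactSupport
  · exact ((hρc.comp continuous_neg)).smul (dz_cont_z hψ x)
  · exact hcs_of_rho_factor hρs _ (fun z hz => by simp [hz])

lemma hasFDerivAt_Phi (hΩo : IsOpen Ω)
    (hd2 : ∀ x ∈ Ω, DifferentiableAt ℝ d x ∧ ‖fderiv ℝ d x‖ ≤ 1)
    (hψ : ContDiff ℝ 1 ψ) (hψc : HasCompactSupport ψ)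
    (hρc : Continuous ρ) (hρs : tsupport ρ ⊆ closedBall 0 ε)
    {x₀ : Fin n → ℝ} (hx₀ : x₀ ∈ Ω) :
    HasFDerivAt (Phi Ω d ψ ρ) (Aop d ψ ρ x₀) x₀ := by
  obtain ⟨Cψ, hCψ⟩ : ∃ C, ∀ y, ‖fderiv ℝ ψ y‖ ≤ C :=
    (hψ.continuous_fderiv one_ne_zero).bounded_above_of_compact_support (hψc.fderiv (𝕜 := ℝ))
  obtain ⟨r, hr, hball⟩ := Metric.isOpen_iff.1 hΩo x₀ hx₀
  have key : HasFDerivAt (fun x => ∫ z, ρ (-z) * ψ (x + d x • z)) (Aop d ψ ρ x₀) x₀ := by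
    apply hasFDerivAt_integral_of_dominated_of_fderiv_le (𝕜 := ℝ)
      (F' := fun x z => ρ (-z) • Dz d ψ x z)
      (bound := fun z => |ρ (-z)| * (Cψ * (1 + ‖z‖))) (ball_mem_nhds x₀ hr)
    · exact Eventually.of_forall fun x =>
        ((hρc.comp continuous_neg).mul
          ((hψ.continuous).comp
            (continuous_const.add (continuous_const_smul _)))).aestronglyMeasurable
    · exact Fx_integrable hψ hρc hρs x₀
    · exact (F'_integrable hψ hρc hρs x₀).aestronglyMeasurable
    · apply Eventually.of_forall
      intro z x hx
      rw [norm_smul (ρ (-z)) (Dz d ψ x z), Real.norm_eq_abs]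
      exact mul_le_mul_of_nonneg_left
        (dz_norm_le hCψ (hd2 x (hball hx)).2 z) (abs_nonneg _)
    · exact bound_integrable hρc hρs Cψ
    · apply Eventually.of_forall
      intro z x hx
      exact (hasFDerivAt_comp hψ (hd2 x (hball hx)).1 z).const_mul (ρ (-z))
  apply key.congr_of_eventuallyEq
  filter_upwards [hΩo.mem_nhds hx₀] with x hx
  simp [Phi, hx]


lemma dz_contOn (hΩo : IsOpen Ω) (hdsm : ContDiffOn ℝ (⊤ : ℕ∞) d Ω) (hψ : ContDiff ℝ 1 ψ)
    (z : Fin n → ℝ) : ContinuousOn (fun x => Dz d ψ x z) Ω := by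
  apply ContinuousOn.clm_comp
  · exact (hψ.continuous_fderiv one_ne_zero).comp_continuousOn
      (continuousOn_id.add ((hdsm.continuousOn).smul continuousOn_const))
  · apply continuousOn_const.add
    have hc : Continuous fun c : (Fin n → ℝ) →L[ℝ] ℝ => c.smulRight z :=
      ((ContinuousLinearMap.smulRightL ℝ (Fin n → ℝ) (Fin n → ℝ)).flip z).continuous
    exact hc.comp_continuousOn
      (hdsm.continuousOn_fderiv_of_isOpen hΩo (by simp))

lemma aop_contOn (hΩo : IsOpen Ω) (hdsm : ContDiffOn ℝ (⊤ : ℕ∞) d Ω)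
    (hd2 : ∀ x ∈ Ω, DifferentiableAt ℝ d x ∧ ‖fderiv ℝ d x‖ ≤ 1)
    (hψ : ContDiff ℝ 1 ψ) (hψc : HasCompactSupport ψ)
    (hρc : Continuous ρ) (hρs : tsupport ρ ⊆ closedBall 0 ε) :
    ContinuousOn (Aop d ψ ρ) Ω := by
  obtain ⟨Cψ, hCψ⟩ : ∃ C, ∀ y, ‖fderiv ℝ ψ y‖ ≤ C :=
    (hψ.continuous_fderiv one_ne_zero).bounded_above_of_compact_support (hψc.fderiv (𝕜 := ℝ))
  intro x₀ hx₀
  obtain ⟨r, hr, hball⟩ := Metric.isOpen_iff.1 hΩo x₀ hx₀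
  apply ContinuousAt.continuousWithinAt
  apply continuousAt_of_dominated (bound := fun z => |ρ (-z)| * (Cψ * (1 + ‖z‖)))
  · exact Eventually.of_forall fun x =>
      (((hρc.comp continuous_neg)).smul (dz_cont_z hψ x)).aestronglyMeasurable
  · filter_upwards [ball_mem_nhds x₀ hr] with x hx
    apply Eventually.of_forall
    intro z
    rw [norm_smul (ρ (-z)) (Dz d ψ x z), Real.norm_eq_abs]
    exact mul_le_mul_of_nonneg_left
      (dz_norm_le hCψ (hd2 x (hball hx)).2 z) (abs_nonneg _)
  · exact bound_integrable hρc hρs Cψ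
  · apply Eventually.of_forall
    intro z
    exact ((continuous_const : Continuous fun _ : Fin n → ℝ => ρ (-z)).continuousAt).smul
      (((dz_contOn hΩo hdsm hψ z).continuousAt (hΩo.mem_nhds hx₀)))

lemma support_Phi_subset (hε : 0 < ε)
    (hd1 : ∀ x ∈ Ω, 0 < d x ∧ d x < Metric.infDist x Ωᶜ)
    (hρs : tsupport ρ ⊆ closedBall 0 ε) :
    support (Phi Ω d ψ ρ) ⊆
      {x | Metric.infDist x (tsupport ψ) ≤ ε * Metric.infDist x Ωᶜ} := by
  intro x hx
  simp only [mem_support, Phi] at hx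
  by_cases hxΩ : x ∈ Ω
  swap
  · simp [hxΩ] at hx
  rw [if_pos hxΩ] at hx
  have hex : ∃ z, ρ (-z) * ψ (x + d x • z) ≠ 0 := by
    by_contra h
    push_neg at h
    exact hx (by simp [h])
  obtain ⟨z, hz⟩ := hex
  have h1 : ρ (-z) ≠ 0 := fun h => hz (by simp [h])
  have h2 : ψ (x + d x • z) ≠ 0 := fun h => hz (by simp [h])
  have hzε : ‖z‖ ≤ ε := by
    have := hρs (subset_tsupport ρ (mem_support.2 h1))
    simpa [mem_closedBall, dist_zero_right] using this
  have hk : x + d x • z ∈ tsupport ψ := subset_tsupport ψ (mem_support.2 h2)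
  have hdx := hd1 x hxΩ
  calc Metric.infDist x (tsupport ψ) ≤ dist x (x + d x • z) :=
        Metric.infDist_le_dist_of_mem hk
    _ = ‖d x • z‖ := by simp [dist_eq_norm]
    _ = d x * ‖z‖ := by rw [norm_smul, Real.norm_eq_abs, abs_of_pos hdx.1]
    _ ≤ Metric.infDist x Ωᶜ * ε := by
        apply mul_le_mul hdx.2.le hzε (norm_nonneg _) Metric.infDist_nonneg
    _ = ε * Metric.infDist x Ωᶜ := mul_comm _ _

lemma phi_nice (hΩo : IsOpen Ω) (hΩb : Bornology.IsBounded Ω)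
    (hdsm : ContDiffOn ℝ (⊤ : ℕ∞) d Ω)
    (hd1 : ∀ x ∈ Ω, 0 < d x ∧ d x < Metric.infDist x Ωᶜ)
    (hd2 : ∀ x ∈ Ω, DifferentiableAt ℝ d x ∧ ‖fderiv ℝ d x‖ ≤ 1)
    (hψ : ContDiff ℝ 1 ψ) (hψc : HasCompactSupport ψ) (hψs : tsupport ψ ⊆ Ω)
    (hρc : Continuous ρ) (hρs : tsupport ρ ⊆ closedBall 0 ε) (hε : 0 < ε)
    (hne : (tsupport ψ).Nonempty) :
    ContDiff ℝ 1 (Phi Ω d ψ ρ) ∧ HasCompactSupport (Phi Ω d ψ ρ) ∧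
      tsupport (Phi Ω d ψ ρ) ⊆ Ω := by
  set C := {x | Metric.infDist x (tsupport ψ) ≤ ε * Metric.infDist x Ωᶜ} with hC
  have hCcl : IsClosed C :=
    isClosed_le (Metric.continuous_infDist_pt _)
      (continuous_const.mul (Metric.continuous_infDist_pt _))
  have hCΩ : C ⊆ Ω := by
    intro x hx
    by_contra hxΩ
    have h0 : Metric.infDist x Ωᶜ = 0 := Metric.infDist_zero_of_mem hxΩ
    have hx' : Metric.infDist x (tsupport ψ) ≤ ε * Metric.infDist x Ωᶜ := hx
    rw [h0, mul_zero] at hx'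
    have : Metric.infDist x (tsupport ψ) = 0 :=
      le_antisymm hx' Metric.infDist_nonneg
    have : x ∈ tsupport ψ :=
      ((isClosed_tsupport ψ).mem_iff_infDist_zero hne).2 this
    exact hxΩ (hψs this)
  have hCcp : IsCompact C :=
    Metric.isCompact_of_isClosed_isBounded hCcl (hΩb.subset hCΩ)
  have hsupp : support (Phi Ω d ψ ρ) ⊆ C := support_Phi_subset hε hd1 hρs
  have htsupp : tsupport (Phi Ω d ψ ρ) ⊆ C := closure_minimal hsupp hCcl
  refine ⟨?_, ?_, htsupp.trans hCΩ⟩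
  swap
  · exact IsCompact.of_isClosed_subset hCcp (isClosed_tsupport _) htsupp
  have hzero : ∀ x ∉ C, Phi Ω d ψ ρ =ᶠ[nhds x] 0 := by
    intro x hx
    filter_upwards [hCcl.isOpen_compl.mem_nhds hx] with y hy
    by_contra h
    exact hy (hsupp (mem_support.2 h))
  rw [contDiff_one_iff_fderiv]
  constructor
  · intro x
    by_cases hx : x ∈ Ω
    · exact (hasFDerivAt_Phi hΩo hd2 hψ hψc hρc hρs hx).differentiableAt
    · exact (differentiableAt_const (0 : ℝ)).congr_of_eventuallyEq (hzero x fun h => hx (hCΩ h))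
  · rw [continuous_iff_continuousAt]
    intro x
    by_cases hx : x ∈ Ω
    · apply ContinuousAt.congr
        ((aop_contOn hΩo hdsm hd2 hψ hψc hρc hρs).continuousAt (hΩo.mem_nhds hx))
      filter_upwards [hΩo.mem_nhds hx] with y hy
      exact (hasFDerivAt_Phi hΩo hd2 hψ hψc hρc hρs hy).fderiv.symm
    · have hxC : x ∉ C := fun h => hx (hCΩ h)
      apply ContinuousAt.congr (continuousAt_const (y := (0 : (Fin n → ℝ) →L[ℝ] ℝ)))
      filter_upwards [hCcl.isOpen_compl.mem_nhds hxC] with y hy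
      have : Phi Ω d ψ ρ =ᶠ[nhds y] 0 := hzero y hy
      rw [this.fderiv_eq]
      exact (fderiv_const_apply (0:ℝ)).symm

lemma fderiv_Phi_apply (hΩo : IsOpen Ω)
    (hd2 : ∀ x ∈ Ω, DifferentiableAt ℝ d x ∧ ‖fderiv ℝ d x‖ ≤ 1)
    (hψ : ContDiff ℝ 1 ψ) (hψc : HasCompactSupport ψ)
    (hρc : Continuous ρ) (hρs : tsupport ρ ⊆ closedBall 0 ε)
    {x : Fin n → ℝ} (hx : x ∈ Ω) (v : Fin n → ℝ) :
    fderiv ℝ (Phi Ω d ψ ρ) x v =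
      ∫ z, ρ (-z) * fderiv ℝ ψ (x + d x • z) (v + (fderiv ℝ d x v) • z) := by
  rw [(hasFDerivAt_Phi hΩo hd2 hψ hψc hρc hρs hx).fderiv]
  rw [Aop, ContinuousLinearMap.integral_apply (F'_integrable hψ hρc hρs x)]
  simp only [ContinuousLinearMap.smul_apply, Dz, ContinuousLinearMap.comp_apply,
    ContinuousLinearMap.add_apply, ContinuousLinearMap.id_apply,
    ContinuousLinearMap.smulRight_apply, smul_eq_mul]


variable {n : ℕ} {ρ : (Fin n → ℝ) → ℝ}

lemma sum_alg (L : (Fin n → ℝ) →L[ℝ] ℝ) (g f : Fin n → ℝ) (z : Fin n → ℝ) :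
    ∑ l, (∑ j, g j * ((if j = l then (1:ℝ) else 0) + f j * z l)) * L (Pi.single l 1)
      = ∑ j, g j * L (Pi.single j 1 + f j • z) := by
  have hsing : ∀ l, Pi.single l (z l) = z l • (Pi.single l (1:ℝ) : Fin n → ℝ) := by
    intro l; funext m
    simp only [Pi.single_apply, Pi.smul_apply, smul_eq_mul]
    split <;> simp
  have hLz : L z = ∑ l, z l * L (Pi.single l 1) := by
    conv_lhs => rw [← Finset.univ_sum_single z]
    rw [map_sum]
    exact Finset.sum_congr rfl fun l _ => by rw [hsing l, ContinuousLinearMap.map_smul, smul_eq_mul]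
  have hrhs : ∀ j, g j * L (Pi.single j 1 + f j • z)
      = g j * L (Pi.single j 1) + ∑ l, g j * f j * z l * L (Pi.single l 1) := by
    intro j
    rw [map_add, ContinuousLinearMap.map_smul, smul_eq_mul, hLz, mul_add, Finset.mul_sum, Finset.mul_sum]
    congr 1
    exact Finset.sum_congr rfl fun l _ => by ring
  rw [Finset.sum_congr rfl fun j _ => hrhs j, Finset.sum_add_distrib]
  have hlhs : ∀ l, (∑ j, g j * ((if j = l then (1:ℝ) else 0) + f j * z l)) * L (Pi.single l 1)
      = (∑ j, (if j = l then g j * L (Pi.single l 1) else 0))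
        + ∑ j, g j * f j * z l * L (Pi.single l 1) := by
    intro l
    rw [Finset.sum_mul, ← Finset.sum_add_distrib]
    refine Finset.sum_congr rfl fun j _ => ?_
    by_cases h : j = l <;> simp only [h, if_pos, if_true, if_neg, not_false_iff] <;> ring
  rw [Finset.sum_congr rfl fun l _ => hlhs l, Finset.sum_add_distrib]
  congr 1
  · rw [Finset.sum_comm]
    exact Finset.sum_congr rfl fun j _ => by simp
  · rw [Finset.sum_comm]

lemma rho_scaled_integral (hρint : (∫ z, ρ z) = 1) {c : ℝ} (hc : 0 < c) (x : Fin n → ℝ) :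
    ∫ y, (c⁻¹) ^ n * ρ (c⁻¹ • (x - y)) = 1 := by
  rw [integral_const_mul]
  have h1 : (fun y => ρ (c⁻¹ • (x - y))) = fun y => (fun u => ρ (c⁻¹ • u)) (x + (- y)) := by
    funext y; simp [sub_eq_add_neg]
  rw [h1, integral_neg_eq_self (μ := volume) fun y => (fun u => ρ (c⁻¹ • u)) (x + y),
    integral_add_left_eq_self (fun u => ρ (c⁻¹ • u)) x]
  rw [Measure.integral_comp_inv_smul_of_nonneg volume ρ hc.le, hρint,
    Module.finrank_fintype_fun_eq_card, Fintype.card_fin]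
  simp only [smul_eq_mul, mul_one]
  rw [inv_pow, inv_mul_cancel₀ (pow_ne_zero n hc.ne')]


variable {n : ℕ} {ρ ψ : (Fin n → ℝ) → ℝ} {ε : ℝ}

lemma hcs_of_rho_factor' (hρs : tsupport ρ ⊆ closedBall 0 ε)
    {Z : Type*} [Zero Z] (g : (Fin n → ℝ) → Z) (hg : ∀ z, ρ (-z) = 0 → g z = 0) :
    HasCompactSupport g := by
  apply HasCompactSupport.intro (isCompact_closedBall (0 : Fin n → ℝ) ε)
  intro z hz
  apply hg
  apply image_eq_zero_of_notMem_tsupport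
  intro h
  have := hρs h
  simp only [mem_closedBall, dist_zero_right, norm_neg] at this
  apply hz
  simpa [mem_closedBall, dist_zero_right] using this

lemma term_integrable (hψ : ContDiff ℝ 1 ψ) (hρc : Continuous ρ)
    (hρs : tsupport ρ ⊆ closedBall 0 ε) (a : ℝ) (x v : Fin n → ℝ) (w : (Fin n → ℝ) → (Fin n → ℝ)) (hw : Continuous w) {c : ℝ} :
    Integrable (fun z => a * (ρ (-z) * fderiv ℝ ψ (x + c • z) (v + w z))
      : (Fin n → ℝ) → ℝ) (μ := volume) := by
  apply Continuous.integrable_of_hasCompactSupport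
  · exact continuous_const.mul ((hρc.comp continuous_neg).mul
      (Continuous.clm_apply
        ((hψ.continuous_fderiv one_ne_zero).comp
          (continuous_const.add (continuous_const_smul _)))
        (continuous_const.add hw)))
  · exact hcs_of_rho_factor' hρs _ (fun z hz => by simp [hz])

lemma perx (hψ : ContDiff ℝ 1 ψ) (hρc : Continuous ρ)
    (hρs : tsupport ρ ⊆ closedBall 0 ε)
    (g f : Fin n → ℝ) {c : ℝ} (hc : 0 < c) (x : Fin n → ℝ) :
    (∫ y, ∑ l, ((c⁻¹) ^ n * ρ (c⁻¹ • (x - y)) *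
        (∑ j, g j * ((if j = l then (1:ℝ) else 0) + f j * (c⁻¹ * (y l - x l))))) *
          fderiv ℝ ψ y (Pi.single l 1))
      = ∑ j, g j * ∫ z, ρ (-z) * fderiv ℝ ψ (x + c • z) (Pi.single j 1 + f j • z) := by
  have hcn : (c : ℝ) ^ n ≠ 0 := pow_ne_zero n hc.ne'
  set F : (Fin n → ℝ) → ℝ := fun y => ∑ l, ((c⁻¹) ^ n * ρ (c⁻¹ • (x - y)) *
    (∑ j, g j * ((if j = l then (1:ℝ) else 0) + f j * (c⁻¹ * (y l - x l))))) *
      fderiv ℝ ψ y (Pi.single l 1) with hF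
  have step1 : (∫ y, F y) = ∫ u, F (x + u) :=
    (integral_add_left_eq_self F x).symm
  have step2 : (∫ z, F (x + c • z)) = (c ^ n)⁻¹ • ∫ u, F (x + u) := by
    have := Measure.integral_comp_smul_of_nonneg volume (fun u => F (x + u)) c (hR := hc.le)
    rw [Module.finrank_fintype_fun_eq_card, Fintype.card_fin] at this
    exact this
  have hkey : ∀ z, F (x + c • z) = (c⁻¹) ^ n *
      (ρ (-z) * ∑ l, (∑ j, g j * ((if j = l then (1:ℝ) else 0) + f j * z l)) *
        fderiv ℝ ψ (x + c • z) (Pi.single l 1)) := by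
    intro z
    have h1 : c⁻¹ • (x - (x + c • z)) = -z := by
      rw [sub_add_cancel_left, smul_neg, smul_smul, inv_mul_cancel₀ hc.ne', one_smul]
    have h2 : ∀ l, c⁻¹ * ((x + c • z) l - x l) = z l := by
      intro l
      simp only [Pi.add_apply, Pi.smul_apply, smul_eq_mul, add_sub_cancel_left]
      rw [inv_mul_cancel_left₀ hc.ne']
    rw [hF]
    simp only [h1, h2, Finset.mul_sum]
    exact Finset.sum_congr rfl fun l _ => by
      simp only [Finset.sum_mul, Finset.mul_sum]
      exact Finset.sum_congr rfl fun j _ => by ring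
  have step3 : (∫ z, F (x + c • z)) = (c⁻¹) ^ n *
      ∫ z, ρ (-z) * ∑ l, (∑ j, g j * ((if j = l then (1:ℝ) else 0) + f j * z l)) *
        fderiv ℝ ψ (x + c • z) (Pi.single l 1) := by
    rw [integral_congr_ae (Eventually.of_forall hkey), integral_const_mul]
  have step4 : (∫ u, F (x + u)) = ∫ z, ρ (-z) *
      ∑ l, (∑ j, g j * ((if j = l then (1:ℝ) else 0) + f j * z l)) *
        fderiv ℝ ψ (x + c • z) (Pi.single l 1) := by
    have := step2.symm.trans step3
    rw [smul_eq_mul] at this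
    rw [inv_pow] at this
    exact mul_left_cancel₀ (inv_ne_zero hcn) this
  rw [step1, step4]
  have hre : ∀ z : Fin n → ℝ, ρ (-z) *
      ∑ l, (∑ j, g j * ((if j = l then (1:ℝ) else 0) + f j * z l)) *
        fderiv ℝ ψ (x + c • z) (Pi.single l 1)
      = ∑ j, g j * (ρ (-z) * fderiv ℝ ψ (x + c • z) (Pi.single j 1 + f j • z)) := by
    intro z
    rw [sum_alg (fderiv ℝ ψ (x + c • z)) g f z, Finset.mul_sum]
    exact Finset.sum_congr rfl fun j _ => by ring
  rw [integral_congr_ae (Eventually.of_forall hre)]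
  rw [integral_finset_sum _ (fun j _ => term_integrable hψ hρc hρs (g j) x (Pi.single j 1)
    (fun z => f j • z) (continuous_const_smul _) (c := c))]
  exact Finset.sum_congr rfl fun j _ => integral_const_mul _ _



section Main

variable {N : ℕ} {Ω : Set (Fin n → ℝ)}
  {G : (Fin n → ℝ) → Fin N → Fin n → ℝ} {d ψ ρ : (Fin n → ℝ) → ℝ} {ε : ℝ}

noncomputable def Kker (G : (Fin n → ℝ) → Fin N → Fin n → ℝ) (d ρ : (Fin n → ℝ) → ℝ)
    (i : Fin N) (l : Fin n) (x y : Fin n → ℝ) : ℝ :=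
  ((d x)⁻¹) ^ n * ρ ((d x)⁻¹ • (x - y)) *
    (∑ j, G x i j * ((if j = l then (1 : ℝ) else 0) +
      fderiv ℝ d x (Pi.single j 1) * ((d x)⁻¹ * (y l - x l))))

noncomputable def Pfun (G : (Fin n → ℝ) → Fin N → Fin n → ℝ) (d ψ ρ : (Fin n → ℝ) → ℝ)
    (i : Fin N) (l : Fin n) (p : (Fin n → ℝ) × (Fin n → ℝ)) : ℝ :=
  Kker G d ρ i l p.2 p.1 * fderiv ℝ ψ p.1 (Pi.single l 1)

lemma Kker_cont_y (hρc : Continuous ρ) (i : Fin N) (l : Fin n) (x : Fin n → ℝ) :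
    Continuous (fun y => Kker G d ρ i l x y) := by
  apply Continuous.mul
  · exact continuous_const.mul
      (hρc.comp (by fun_prop : Continuous fun y : Fin n → ℝ => (d x)⁻¹ • (x - y)))
  · exact continuous_finset_sum _ fun j _ => continuous_const.mul
      (continuous_const.add (continuous_const.mul
        (continuous_const.mul ((continuous_apply l).sub continuous_const))))

lemma rho_far_zero (hρs : tsupport ρ ⊆ closedBall 0 ε) {x y : Fin n → ℝ} (hc : 0 < d x)
    (hy : ¬ y ∈ closedBall x (d x * ε)) :
    ρ ((d x)⁻¹ • (x - y)) = 0 := by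
  apply image_eq_zero_of_notMem_tsupport
  intro hmem
  have hle := hρs hmem
  simp only [mem_closedBall, dist_zero_right] at hle
  rw [norm_smul, Real.norm_eq_abs, abs_of_pos (inv_pos.2 hc)] at hle
  apply hy
  simp only [mem_closedBall]
  have h1 : ‖x - y‖ ≤ d x * ε := by
    rw [inv_mul_le_iff₀ hc] at hle
    exact hle
  calc dist y x = ‖x - y‖ := by rw [dist_eq_norm, norm_sub_rev]
    _ ≤ d x * ε := h1

lemma slice_int (hρc : Continuous ρ) (hρs : tsupport ρ ⊆ closedBall 0 ε)
    (hψ : ContDiff ℝ 1 ψ) {x : Fin n → ℝ} (hc : 0 < d x) (i : Fin N) (l : Fin n) :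
    Integrable (fun y => Pfun G d ψ ρ i l (y, x)) volume := by
  apply Continuous.integrable_of_hasCompactSupport
  · exact (Kker_cont_y hρc i l x).mul
      ((hψ.continuous_fderiv one_ne_zero).clm_apply continuous_const)
  · apply HasCompactSupport.intro (isCompact_closedBall x (d x * ε))
    intro y hy
    have h0 := rho_far_zero hρs hc hy
    simp [Pfun, Kker, h0]

lemma q_int (hρc : Continuous ρ) (hρs : tsupport ρ ⊆ closedBall 0 ε)
    {x : Fin n → ℝ} (hc : 0 < d x) :
    Integrable (fun y => ((d x)⁻¹) ^ n * ρ ((d x)⁻¹ • (x - y))) volume := by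
  apply Continuous.integrable_of_hasCompactSupport
  · exact continuous_const.mul
      (hρc.comp (by fun_prop : Continuous fun y : Fin n → ℝ => (d x)⁻¹ • (x - y)))
  · apply HasCompactSupport.intro (isCompact_closedBall x (d x * ε))
    intro y hy
    have h0 := rho_far_zero hρs hc hy
    simp [h0]

lemma pt_bound (hρs : tsupport ρ ⊆ closedBall 0 ε) (hρpos : ∀ z, 0 ≤ ρ z)
    {Cψ : ℝ} (hCψ : ∀ y, ‖fderiv ℝ ψ y‖ ≤ Cψ)
    {x : Fin n → ℝ} (hc : 0 < d x) {i : Fin N} (hG1 : ∀ j, |G x i j| ≤ 1)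
    (hfd : ‖fderiv ℝ d x‖ ≤ 1) (hε : 0 ≤ ε) (l : Fin n) (y : Fin n → ℝ) :
    |Pfun G d ψ ρ i l (y, x)| ≤
      ((d x)⁻¹) ^ n * ρ ((d x)⁻¹ • (x - y)) * ((n * (1 + ε)) * Cψ) := by
  have hCψ0 : 0 ≤ Cψ := le_trans (norm_nonneg _) (hCψ 0)
  have hA0 : (0:ℝ) ≤ ((d x)⁻¹) ^ n := pow_nonneg (inv_nonneg.2 hc.le) n
  by_cases h0 : ρ ((d x)⁻¹ • (x - y)) = 0
  · simp [Pfun, Kker, h0]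
  · have hmem : (d x)⁻¹ • (x - y) ∈ tsupport ρ :=
      subset_tsupport ρ (mem_support.2 h0)
    have hnorm : ‖(d x)⁻¹ • (x - y)‖ ≤ ε := by
      have := hρs hmem
      simpa [mem_closedBall, dist_zero_right] using this
    have ht : |(d x)⁻¹ * (y l - x l)| ≤ ε := by
      have h1 : (d x)⁻¹ * (y l - x l) = -(((d x)⁻¹ • (x - y)) l) := by
        simp only [Pi.smul_apply, Pi.sub_apply, smul_eq_mul]
        ring
      rw [h1, abs_neg]
      calc |((d x)⁻¹ • (x - y)) l| ≤ ‖(d x)⁻¹ • (x - y)‖ := by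
            have := norm_le_pi_norm ((d x)⁻¹ • (x - y)) l
            rwa [Real.norm_eq_abs] at this
        _ ≤ ε := hnorm
    have hS : |∑ j, G x i j * ((if j = l then (1:ℝ) else 0) +
        fderiv ℝ d x (Pi.single j 1) * ((d x)⁻¹ * (y l - x l)))| ≤ n * (1 + ε) := by
      calc |∑ j, G x i j * ((if j = l then (1:ℝ) else 0) +
          fderiv ℝ d x (Pi.single j 1) * ((d x)⁻¹ * (y l - x l)))|
          ≤ ∑ j, |G x i j * ((if j = l then (1:ℝ) else 0) +
            fderiv ℝ d x (Pi.single j 1) * ((d x)⁻¹ * (y l - x l)))| :=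
            Finset.abs_sum_le_sum_abs _ _
        _ ≤ ∑ _j : Fin n, 1 * (1 + 1 * ε) := by
            apply Finset.sum_le_sum
            intro j _
            rw [abs_mul]
            apply mul_le_mul (hG1 j) ?_ (abs_nonneg _) zero_le_one
            calc |(if j = l then (1:ℝ) else 0) +
                fderiv ℝ d x (Pi.single j 1) * ((d x)⁻¹ * (y l - x l))|
                ≤ |if j = l then (1:ℝ) else 0| +
                  |fderiv ℝ d x (Pi.single j 1)| * |(d x)⁻¹ * (y l - x l)| := by
                  rw [← abs_mul]; exact abs_add_le _ _
              _ ≤ 1 + 1 * ε := by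
                  apply add_le_add
                  · split <;> simp
                  · apply mul_le_mul ?_ ht (abs_nonneg _) zero_le_one
                    calc |fderiv ℝ d x (Pi.single j 1)|
                        ≤ ‖fderiv ℝ d x‖ * ‖(Pi.single j 1 : Fin n → ℝ)‖ := by
                          have := (fderiv ℝ d x).le_opNorm (Pi.single j (1:ℝ))
                          simpa [Real.norm_eq_abs] using this
                      _ ≤ 1 := by
                          rw [Pi.norm_single]
                          simpa using hfd
        _ = n * (1 + ε) := by
            rw [Finset.sum_const, Finset.card_univ, Fintype.card_fin, nsmul_eq_mul]
            ring
    have hD : |fderiv ℝ ψ y (Pi.single l 1)| ≤ Cψ := by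
      calc |fderiv ℝ ψ y (Pi.single l 1)|
          ≤ ‖fderiv ℝ ψ y‖ * ‖(Pi.single l 1 : Fin n → ℝ)‖ := by
            have := (fderiv ℝ ψ y).le_opNorm (Pi.single l (1:ℝ))
            simpa [Real.norm_eq_abs] using this
        _ ≤ Cψ := by rw [Pi.norm_single]; simpa using hCψ y
    have hrw : |Pfun G d ψ ρ i l (y, x)| =
        ((d x)⁻¹) ^ n * ρ ((d x)⁻¹ • (x - y)) * (|∑ j, G x i j *
          ((if j = l then (1:ℝ) else 0) +
            fderiv ℝ d x (Pi.single j 1) * ((d x)⁻¹ * (y l - x l)))| *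
          |fderiv ℝ ψ y (Pi.single l 1)|) := by
      rw [Pfun, Kker, abs_mul, abs_mul, abs_mul]
      rw [abs_of_nonneg hA0, abs_of_nonneg (hρpos _), mul_assoc]
    rw [hrw]
    apply mul_le_mul_of_nonneg_left ?_ (mul_nonneg hA0 (hρpos _))
    exact mul_le_mul hS hD (abs_nonneg _) (by positivity)

lemma norm_int_bound (hρc : Continuous ρ) (hρs : tsupport ρ ⊆ closedBall 0 ε)
    (hρpos : ∀ z, 0 ≤ ρ z) (hρint : (∫ z, ρ z) = 1)
    (hψ : ContDiff ℝ 1 ψ) {Cψ : ℝ} (hCψ : ∀ y, ‖fderiv ℝ ψ y‖ ≤ Cψ)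
    {x : Fin n → ℝ} (hc : 0 < d x) {i : Fin N} (hG1 : ∀ j, |G x i j| ≤ 1)
    (hfd : ‖fderiv ℝ d x‖ ≤ 1) (hε : 0 < ε) (l : Fin n) :
    (∫ y in Ω, ‖Pfun G d ψ ρ i l (y, x)‖) ≤ (n * (1 + ε)) * Cψ := by
  have hCψ0 : 0 ≤ Cψ := le_trans (norm_nonneg _) (hCψ 0)
  have hC0 : (0:ℝ) ≤ (n * (1 + ε)) * Cψ := by positivity
  calc (∫ y in Ω, ‖Pfun G d ψ ρ i l (y, x)‖)
      ≤ ∫ y in Ω, ((d x)⁻¹) ^ n * ρ ((d x)⁻¹ • (x - y)) * ((n * (1 + ε)) * Cψ) := by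
        apply integral_mono ((slice_int hρc hρs hψ hc i l).norm.restrict)
          (((q_int hρc hρs hc).mul_const _).restrict)
        intro y
        show ‖Pfun G d ψ ρ i l (y, x)‖ ≤ _
        rw [Real.norm_eq_abs]
        exact pt_bound hρs hρpos hCψ hc hG1 hfd hε.le l y
    _ ≤ ∫ y, ((d x)⁻¹) ^ n * ρ ((d x)⁻¹ • (x - y)) * ((n * (1 + ε)) * Cψ) := by
        apply setIntegral_le_integral ((q_int hρc hρs hc).mul_const _)
        apply Eventually.of_forall
        intro y
        have : (0:ℝ) ≤ ((d x)⁻¹) ^ n * ρ ((d x)⁻¹ • (x - y)) :=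
          mul_nonneg (pow_nonneg (inv_nonneg.2 hc.le) n) (hρpos _)
        positivity
    _ = (n * (1 + ε)) * Cψ := by
        rw [integral_mul_const, rho_scaled_integral hρint hc x, one_mul]

end Main

end Stmt12Aux

open MeasureTheory Metric Set Filter Function Stmt12Aux

/-- If `μ = G‖μ‖` is row-wise divergence free, then so is each anisotropic mollification
`μ_ε = F_ε 𝓛ⁿ`: `∫_Ω Σ_j F_ε^{ij}(y) ∂_j ψ(y) dy = 0` for all `ψ ∈ C_c¹(Ω)`. -/
theorem stmt12 {n N : ℕ} (Ω : Set (Fin n → ℝ)) (hΩo : IsOpen Ω)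
    (hΩb : Bornology.IsBounded Ω)
    (σm : Measure (Fin n → ℝ)) [IsFiniteMeasure σm] (hσ : σm Ωᶜ = 0)
    (G : (Fin n → ℝ) → Fin N → Fin n → ℝ) (hGm : Measurable G)
    (hGnorm : ∀ᵐ x ∂σm, Real.sqrt (∑ i, ∑ j, (G x i j) ^ 2) = 1)
    (d : (Fin n → ℝ) → ℝ) (hdsm : ContDiffOn ℝ (⊤ : ℕ∞) d Ω)
    (hd1 : ∀ x ∈ Ω, 0 < d x ∧ d x < Metric.infDist x Ωᶜ)
    (hd2 : ∀ x ∈ Ω, DifferentiableAt ℝ d x ∧ ‖fderiv ℝ d x‖ ≤ 1)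
    (ε : ℝ) (hε : 0 < ε)
    (ρ : (Fin n → ℝ) → ℝ) (hρc : Continuous ρ) (hρpos : ∀ z, 0 ≤ ρ z)
    (hρsupp : tsupport ρ ⊆ Metric.closedBall 0 ε) (hρint : (∫ z, ρ z) = 1)
    (hdivfree : ∀ φ : (Fin n → ℝ) → ℝ, ContDiff ℝ 1 φ → HasCompactSupport φ →
      tsupport φ ⊆ Ω → ∀ i,
        (∫ x, ∑ j, G x i j * fderiv ℝ φ x (Pi.single j 1) ∂σm) = 0) :
    ∀ ψ : (Fin n → ℝ) → ℝ, ContDiff ℝ 1 ψ → HasCompactSupport ψ → tsupport ψ ⊆ Ω →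
      ∀ i, (∫ y in Ω, ∑ j, molDensity' σm G d ρ y i j * fderiv ℝ ψ y (Pi.single j 1)) = 0 := by
  intro ψ hψ hψc hψs i
  by_cases hne : (tsupport ψ).Nonempty
  swap
  · -- ψ vanishes identically
    have hψ0 : ψ = fun _ => (0:ℝ) := by
      funext y
      by_contra h
      exact hne ⟨y, subset_tsupport ψ (mem_support.2 h)⟩
    have hz : ∀ y, fderiv ℝ ψ y = 0 := by
      intro y
      rw [hψ0]
      exact fderiv_const_apply 0
    have : ∀ y, (∑ j, molDensity' σm G d ρ y i j * fderiv ℝ ψ y (Pi.single j 1)) = 0 := by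
      intro y
      simp [hz]
    rw [setIntegral_congr_fun hΩo.measurableSet (fun y _ => this y)]
    simp
  -- main case
  obtain ⟨Cψ, hCψ⟩ : ∃ C, ∀ y, ‖fderiv ℝ ψ y‖ ≤ C :=
    (hψ.continuous_fderiv one_ne_zero).bounded_above_of_compact_support (hψc.fderiv (𝕜 := ℝ))
  have h_aeΩ : ∀ᵐ x ∂σm, x ∈ Ω := by
    rw [ae_iff]
    exact hσ
  have h_G1 : ∀ᵐ x ∂σm, ∀ j, |G x i j| ≤ 1 := by
    filter_upwards [hGnorm] with x hx
    intro j
    have h0 : (0:ℝ) ≤ ∑ i', ∑ j', (G x i' j') ^ 2 := by positivity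
    have hsum : (∑ i', ∑ j', (G x i' j') ^ 2) = 1 := by
      have := Real.sq_sqrt h0
      rw [hx] at this
      linarith [this]
    have h1 : (G x i j) ^ 2 ≤ 1 := by
      rw [← hsum]
      have h2 : (G x i j) ^ 2 ≤ ∑ j', (G x i j') ^ 2 :=
        Finset.single_le_sum (f := fun j' => (G x i j') ^ 2)
          (fun j' _ => sq_nonneg _) (Finset.mem_univ j)
      have h3 : (∑ j', (G x i j') ^ 2) ≤ ∑ i', ∑ j', (G x i' j') ^ 2 :=
        Finset.single_le_sum (f := fun i' => ∑ j', (G x i' j') ^ 2)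
          (fun i' _ => by positivity) (Finset.mem_univ i)
      linarith
    exact (sq_le_one_iff_abs_le_one _).1 h1
  have hres : σm.restrict Ω = σm := Measure.restrict_eq_self_of_ae_mem h_aeΩ
  have hdam : AEMeasurable d σm := by
    rw [← hres]
    exact (hdsm.continuousOn).aemeasurable hΩo.measurableSet
  have hfdam : ∀ v : Fin n → ℝ, AEMeasurable (fun x => fderiv ℝ d x v) σm := by
    intro v
    rw [← hres]
    exact ((hdsm.continuousOn_fderiv_of_isOpen hΩo (by simp)).clm_apply
      continuousOn_const).aemeasurable hΩo.measurableSet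
  have hGam : ∀ j, Measurable fun x => G x i j := fun j => (hGm.eval).eval
  set μy : Measure (Fin n → ℝ) := volume.restrict Ω with hμy
  -- joint measurability
  have h_meas : ∀ l, AEStronglyMeasurable (Pfun G d ψ ρ i l) (μy.prod σm) := by
    intro l
    have hq2 : Measure.QuasiMeasurePreserving
        (Prod.snd : (Fin n → ℝ) × (Fin n → ℝ) → (Fin n → ℝ)) (μy.prod σm) σm :=
      Measure.quasiMeasurePreserving_snd
    have a1 : AEMeasurable (fun p : (Fin n → ℝ) × (Fin n → ℝ) => d p.2) (μy.prod σm) :=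
      hdam.comp_quasiMeasurePreserving hq2
    have a2 : AEMeasurable
        (fun p : (Fin n → ℝ) × (Fin n → ℝ) => ρ ((d p.2)⁻¹ • (p.2 - p.1))) (μy.prod σm) :=
      hρc.measurable.comp_aemeasurable
        ((a1.inv).smul ((measurable_snd.sub measurable_fst).aemeasurable))
    have a3 : ∀ j, AEMeasurable
        (fun p : (Fin n → ℝ) × (Fin n → ℝ) => fderiv ℝ d p.2 (Pi.single j 1)) (μy.prod σm) :=
      fun j => (hfdam _).comp_quasiMeasurePreserving hq2
    have a4 : AEMeasurable (fun p : (Fin n → ℝ) × (Fin n → ℝ) =>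
        ∑ j, G p.2 i j * ((if j = l then (1:ℝ) else 0) +
          fderiv ℝ d p.2 (Pi.single j 1) * ((d p.2)⁻¹ * (p.1 l - p.2 l)))) (μy.prod σm) := by
      apply Finset.aemeasurable_fun_sum
      intro j _
      exact ((hGam j).comp measurable_snd).aemeasurable.mul
        (aemeasurable_const.add ((a3 j).mul (a1.inv.mul
          (((measurable_fst.eval).sub (measurable_snd.eval)).aemeasurable))))
    have a5 : AEMeasurable
        (fun p : (Fin n → ℝ) × (Fin n → ℝ) => fderiv ℝ ψ p.1 (Pi.single l 1)) (μy.prod σm) :=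
      (((hψ.continuous_fderiv one_ne_zero).clm_apply continuous_const).measurable.comp
        measurable_fst).aemeasurable
    exact ((((a1.inv.pow_const n).mul a2).mul a4).mul a5).aestronglyMeasurable
  -- product integrability
  have hPint : ∀ l, Integrable (Pfun G d ψ ρ i l) (μy.prod σm) := by
    intro l
    rw [integrable_prod_iff' (h_meas l)]
    constructor
    · filter_upwards [h_aeΩ] with x hx
      exact (slice_int hρc hρsupp hψ (hd1 x hx).1 i l).restrict
    · apply Integrable.mono' (integrable_const ((n * (1 + ε)) * Cψ))
      · exact ((h_meas l).prod_swap.norm.integral_prod_right')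
      · filter_upwards [h_aeΩ, h_G1] with x hx hG
        rw [Real.norm_eq_abs, abs_of_nonneg (integral_nonneg fun y => norm_nonneg _)]
        exact norm_int_bound hρc hρsupp hρpos hρint hψ hCψ (hd1 x hx).1 hG
          (hd2 x hx).2 hε l
  have hae_y : ∀ᵐ y ∂μy, ∀ l, Integrable (fun x => Pfun G d ψ ρ i l (y, x)) σm :=
    ae_all_iff.2 fun l => (hPint l).prod_right_ae
  -- step 1
  have step1 : (∫ y in Ω, ∑ l, molDensity' σm G d ρ y i l * fderiv ℝ ψ y (Pi.single l 1))
      = ∫ y, (∫ x, (∑ l, Pfun G d ψ ρ i l (y, x)) ∂σm) ∂μy := by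
    apply integral_congr_ae
    filter_upwards [hae_y] with y hy
    calc ∑ l, molDensity' σm G d ρ y i l * fderiv ℝ ψ y (Pi.single l 1)
        = ∑ l, ∫ x, Pfun G d ψ ρ i l (y, x) ∂σm := by
          refine Finset.sum_congr rfl fun l _ => ?_
          exact (integral_mul_const (fderiv ℝ ψ y (Pi.single l 1))
            (fun x => Kker G d ρ i l x y)).symm
      _ = ∫ x, (∑ l, Pfun G d ψ ρ i l (y, x)) ∂σm :=
          (integral_finset_sum _ fun l _ => hy l).symm
  -- step 2 : Fubini
  have step2 : (∫ y, (∫ x, (∑ l, Pfun G d ψ ρ i l (y, x)) ∂σm) ∂μy)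
      = ∫ x, (∫ y, (∑ l, Pfun G d ψ ρ i l (y, x)) ∂μy) ∂σm := by
    apply integral_integral_swap
    exact integrable_finset_sum _ fun l _ => hPint l
  -- step 3 : change of variables, pointwise in x
  have step3 : ∀ᵐ x ∂σm, (∫ y, (∑ l, Pfun G d ψ ρ i l (y, x)) ∂μy)
      = ∑ j, G x i j * fderiv ℝ (Phi Ω d ψ ρ) x (Pi.single j 1) := by
    filter_upwards [h_aeΩ] with x hx
    have hc := (hd1 x hx).1
    have hzero : ∀ y, y ∉ Ω → (∑ l, Pfun G d ψ ρ i l (y, x)) = 0 := by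
      intro y hy
      have h0 : fderiv ℝ ψ y = 0 := by
        by_contra h
        exact hy (hψs (support_fderiv_subset (𝕜 := ℝ) (f := ψ) (mem_support.2 h)))
      apply Finset.sum_eq_zero
      intro l _
      show Kker G d ρ i l x y * fderiv ℝ ψ y (Pi.single l 1) = 0
      rw [h0]
      simp
    rw [hμy, setIntegral_eq_integral_of_forall_compl_eq_zero hzero]
    have hcov := perx (ρ := ρ) hψ hρc hρsupp (fun j => G x i j)
      (fun j => fderiv ℝ d x (Pi.single j 1)) hc x
    calc (∫ y, (∑ l, Pfun G d ψ ρ i l (y, x)))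
        = ∫ y, ∑ l, ((((d x)⁻¹) ^ n * ρ ((d x)⁻¹ • (x - y)) *
            (∑ j, (fun j => G x i j) j * ((if j = l then (1:ℝ) else 0) +
              (fun j => fderiv ℝ d x (Pi.single j 1)) j * ((d x)⁻¹ * (y l - x l))))) *
                fderiv ℝ ψ y (Pi.single l 1)) := rfl
      _ = ∑ j, G x i j * ∫ z, ρ (-z) *
            fderiv ℝ ψ (x + d x • z) (Pi.single j 1 +
              (fderiv ℝ d x (Pi.single j 1)) • z) := hcov
      _ = ∑ j, G x i j * fderiv ℝ (Phi Ω d ψ ρ) x (Pi.single j 1) := by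
          refine Finset.sum_congr rfl fun j _ => ?_
          rw [fderiv_Phi_apply hΩo hd2 hψ hψc hρc hρsupp hx (Pi.single j 1)]
  -- conclusion via divergence freeness
  obtain ⟨hphi1, hphi2, hphi3⟩ := phi_nice hΩo hΩb hdsm hd1 hd2 hψ hψc hψs hρc hρsupp hε hne
  calc (∫ y in Ω, ∑ l, molDensity' σm G d ρ y i l * fderiv ℝ ψ y (Pi.single l 1))
      = ∫ x, (∑ j, G x i j * fderiv ℝ (Phi Ω d ψ ρ) x (Pi.single j 1)) ∂σm := by
        rw [step1, step2]
        exact integral_congr_ae step3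
    _ = 0 := hdivfree (Phi Ω d ψ ρ) hphi1 hphi2 hphi3 i
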